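/- Let a < b be real numbers. Then every local minimum w* of the two-client MaxFL objective v(w) = (1/2)σ((w−a)²) + (1/2)σ((w−b)²) lies in the set (a, a+2] ∪ [b−2, b). -/

import Mathlib

noncomputable def sigmoid (x : ℝ) : ℝ := 1 / (1 + Real.exp (-x))

/-!
At a critical point of `v` the pulls `(w - a) σ'((w - a)²)` and `(w - b) σ'((w - b)²)` cancel, which
forces `a < w < b`. The one-client slope `t σ'(t²)` is strictly decreasing for `t > 2`, so on
`(a + 2, b - 2)` the derivative of `v` is strictly decreasing: `v` is strictly concave there, and a
strictly concave function has no local minimum in the interior of its domain.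
-/

open Set Filter Topology

lemma StrictConcaveOn.not_isLocalMin {E β : Type*} [NormedAddCommGroup E] [NormedSpace ℝ E]
    [Nontrivial E] [AddCommGroup β] [PartialOrder β] [IsOrderedCancelAddMonoid β]
    [Module ℝ β] [PosSMulStrictMono ℝ β] {s : Set E} {f : E → β}
    (hf : StrictConcaveOn ℝ s f) {x : E} (hs : s ∈ 𝓝 x) : ¬IsLocalMin f x := by
  intro hmin
  -- test strict concavity at `x`, the midpoint of `x ± t • v` for a small `t ≠ 0`
  obtain ⟨v, hv⟩ := exists_ne (0 : E)
  have hline : Tendsto (fun t : ℝ => x + t • v) (𝓝 0) (𝓝 x) := by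
    simpa using tendsto_const_nhds.add ((tendsto_id (x := 𝓝 (0 : ℝ))).smul_const v)
  have hgood : ∀ᶠ t in 𝓝 (0 : ℝ), x + t • v ∈ s ∧ f x ≤ f (x + t • v) :=
    hline.eventually (Filter.Eventually.and hs hmin)
  have hgood' : ∀ᶠ t in 𝓝 (0 : ℝ), x + (-t) • v ∈ s ∧ f x ≤ f (x + (-t) • v) :=
    (continuous_neg.tendsto' (0 : ℝ) 0 neg_zero).eventually hgood
  obtain ⟨t, ⟨⟨hs₁, hf₁⟩, hs₂, hf₂⟩, ht⟩ :=
    (((hgood.and hgood').filter_mono nhdsWithin_le_nhds).and self_mem_nhdsWithin).exists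
      (f := 𝓝[≠] (0 : ℝ))
  have hne : x + t • v ≠ x + (-t) • v := fun h => by
    have : t = -t := smul_left_injective ℝ hv (add_left_cancel h)
    exact ht (show t = 0 by linarith)
  have hmid : (1 / 2 : ℝ) • f (x + t • v) + (1 / 2 : ℝ) • f (x + (-t) • v) < f x := by
    convert hf.2 hs₁ hs₂ hne (by norm_num : (0 : ℝ) < 1 / 2)
      (by norm_num : (0 : ℝ) < 1 / 2) (by norm_num)
    module
  have hle : f x ≤ (1 / 2 : ℝ) • f (x + t • v) + (1 / 2 : ℝ) • f (x + (-t) • v) :=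
    calc f x = (1 / 2 : ℝ) • f x + (1 / 2 : ℝ) • f x := by rw [← add_smul]; norm_num
      _ ≤ _ := by gcongr
  exact (hle.trans_lt hmid).false

lemma sigmoid_eq_real_sigmoid : sigmoid = Real.sigmoid := funext fun _ => one_div _

lemma sigmoid_mul_one_sub_sigmoid_pos (x : ℝ) : 0 < Real.sigmoid x * (1 - Real.sigmoid x) :=
  mul_pos (Real.sigmoid_pos x) (sub_pos.2 (Real.sigmoid_lt_one x))

noncomputable def halfSigmoidSq (t : ℝ) : ℝ := Real.sigmoid (t ^ 2) / 2

noncomputable def halfSigmoidSqSlope (t : ℝ) : ℝ :=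
  t * (Real.sigmoid (t ^ 2) * (1 - Real.sigmoid (t ^ 2)))

lemma hasDerivAt_sigmoid_sq (t : ℝ) :
    HasDerivAt (fun t => Real.sigmoid (t ^ 2)) (2 * halfSigmoidSqSlope t) t := by
  refine ((Real.hasDerivAt_sigmoid (t ^ 2)).comp t (hasDerivAt_pow 2 t)).congr_deriv ?_
  simp only [halfSigmoidSqSlope]
  push_cast
  ring

lemma hasDerivAt_halfSigmoidSq (t : ℝ) :
    HasDerivAt halfSigmoidSq (halfSigmoidSqSlope t) t := by
  refine ((hasDerivAt_sigmoid_sq t).div_const 2).congr_deriv ?_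
  ring

lemma halfSigmoidSqSlope_neg (t : ℝ) : halfSigmoidSqSlope (-t) = -halfSigmoidSqSlope t := by
  simp only [halfSigmoidSqSlope, neg_sq, neg_mul]

lemma halfSigmoidSqSlope_pos {t : ℝ} (ht : 0 < t) : 0 < halfSigmoidSqSlope t :=
  mul_pos ht (sigmoid_mul_one_sub_sigmoid_pos _)

lemma halfSigmoidSqSlope_nonpos {t : ℝ} (ht : t ≤ 0) : halfSigmoidSqSlope t ≤ 0 :=
  mul_nonpos_of_nonpos_of_nonneg ht (sigmoid_mul_one_sub_sigmoid_pos _).le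

lemma hasDerivAt_halfSigmoidSqSlope (t : ℝ) :
    HasDerivAt halfSigmoidSqSlope
      (Real.sigmoid (t ^ 2) * (1 - Real.sigmoid (t ^ 2)) *
        (1 + 2 * t ^ 2 * (1 - 2 * Real.sigmoid (t ^ 2)))) t := by
  have hσ := hasDerivAt_sigmoid_sq t
  refine ((hasDerivAt_id t).mul (hσ.mul (hσ.const_sub 1))).congr_deriv ?_
  simp only [halfSigmoidSqSlope, id, Pi.mul_apply]
  ring

lemma halfSigmoidSqSlope_strictAntiOn : StrictAntiOn halfSigmoidSqSlope (Ioi 2) := by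
  refine strictAntiOn_of_deriv_neg (convex_Ioi 2)
    (fun t _ => (hasDerivAt_halfSigmoidSqSlope t).continuousAt.continuousWithinAt) ?_
  rw [interior_Ioi]
  intro t (ht : 2 < t)
  rw [(hasDerivAt_halfSigmoidSqSlope t).deriv]
  have hexp : Real.exp (-t ^ 2) < 1 / 5 := by
    rw [Real.exp_neg, inv_lt_comm₀ (Real.exp_pos _) (by norm_num)]
    nlinarith [Real.add_one_lt_exp (x := t ^ 2) (by positivity)]
  have hσ : 5 / 6 < Real.sigmoid (t ^ 2) := by
    rw [Real.sigmoid_def, lt_inv_comm₀ (by norm_num) (by positivity)]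
    linarith
  -- with `t ^ 2 > 4`, the last factor is below `1 - 4 t ^ 2 / 3 < 0`
  refine mul_neg_of_pos_of_neg (sigmoid_mul_one_sub_sigmoid_pos _) ?_
  nlinarith

lemma hasDerivAt_halfSigmoidSq_add (a b w : ℝ) :
    HasDerivAt (fun w => halfSigmoidSq (w - a) + halfSigmoidSq (w - b))
      (halfSigmoidSqSlope (w - a) - halfSigmoidSqSlope (b - w)) w := by
  rw [sub_eq_add_neg, ← halfSigmoidSqSlope_neg, neg_sub]
  exact ((hasDerivAt_halfSigmoidSq _).comp_sub_const w a).add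
    ((hasDerivAt_halfSigmoidSq _).comp_sub_const w b)

lemma mem_Ioo_of_halfSigmoidSqSlope_sub_eq_zero {a b w : ℝ} (hab : a < b)
    (h : halfSigmoidSqSlope (w - a) - halfSigmoidSqSlope (b - w) = 0) : w ∈ Ioo a b := by
  constructor
  · by_contra! hwa
    linarith [halfSigmoidSqSlope_nonpos (sub_nonpos.2 hwa),
      halfSigmoidSqSlope_pos (show 0 < b - w by linarith)]
  · by_contra! hbw
    linarith [halfSigmoidSqSlope_nonpos (sub_nonpos.2 hbw),
      halfSigmoidSqSlope_pos (show 0 < w - a by linarith)]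

lemma strictConcaveOn_halfSigmoidSq_add (a b : ℝ) :
    StrictConcaveOn ℝ (Ioo (a + 2) (b - 2))
      (fun w => halfSigmoidSq (w - a) + halfSigmoidSq (w - b)) := by
  refine StrictAntiOn.strictConcaveOn_of_deriv (convex_Ioo _ _)
    (fun w _ => (hasDerivAt_halfSigmoidSq_add a b w).continuousAt.continuousWithinAt) ?_
  rw [interior_Ioo]
  intro x ⟨hax, hxb⟩ y ⟨hay, hyb⟩ hxy
  rw [(hasDerivAt_halfSigmoidSq_add a b x).deriv, (hasDerivAt_halfSigmoidSq_add a b y).deriv]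
  have hslope_a : halfSigmoidSqSlope (y - a) < halfSigmoidSqSlope (x - a) :=
    halfSigmoidSqSlope_strictAntiOn (show 2 < x - a by linarith) (show 2 < y - a by linarith)
      (by linarith)
  have hslope_b : halfSigmoidSqSlope (b - x) < halfSigmoidSqSlope (b - y) :=
    halfSigmoidSqSlope_strictAntiOn (show 2 < b - y by linarith) (show 2 < b - x by linarith)
      (by linarith)
  linarith

theorem local_min_location (a b : ℝ) (hab : a < b) (w : ℝ)
    (hmin : IsLocalMin
      (fun w : ℝ => (1 / 2) * sigmoid ((w - a) ^ 2) + (1 / 2) * sigmoid ((w - b) ^ 2)) w) :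
    w ∈ Set.Ioc a (a + 2) ∪ Set.Ico (b - 2) b := by
  have hv : (fun w : ℝ => (1 / 2) * sigmoid ((w - a) ^ 2) + (1 / 2) * sigmoid ((w - b) ^ 2)) =
      fun w => halfSigmoidSq (w - a) + halfSigmoidSq (w - b) := by
    funext w
    simp only [halfSigmoidSq, sigmoid_eq_real_sigmoid]
    ring
  rw [hv] at hmin
  obtain ⟨haw, hwb⟩ := mem_Ioo_of_halfSigmoidSqSlope_sub_eq_zero hab
    (hmin.hasDerivAt_eq_zero (hasDerivAt_halfSigmoidSq_add a b w))
  have hw : w ∉ Ioo (a + 2) (b - 2) := fun hw =>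
    (strictConcaveOn_halfSigmoidSq_add a b).not_isLocalMin (isOpen_Ioo.mem_nhds hw) hmin
  rw [mem_Ioo, not_and_or, not_lt, not_lt] at hw
  exact hw.imp (fun h => ⟨haw, h⟩) (fun h => ⟨h, hwb⟩)
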